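/- arXiv:1607.01280 — 4 statements merged into one kernel-verified Lean document; each statement's English description precedes it below -/
import Mathlib

section
/- Let X and Y be real Banach spaces, F : X → Y, and let x : ℝ → X be differentiable at every t ≥ 0 with continuous derivative x' on [0,∞). Assume that for every t ≥ 0, F is Fréchet differentiable at x(t) and F'(x(t))(x'(t)) = −F(x(t)). Let A₀ : Y → X be a continuous linear two-sided inverse of F'(x(0)), set N₀ = −A₀(F(x(0))), and let x̂(t) = x(0) + t·N₀ be the linearization of x at t = 0. Then for every t ≥ 0: x̂(t) − x(t) = (t + e^{−t} − 1)·N₀ + A₀(F(x(t)) − F(x(0))) − (x(t) − x(0)). -/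
/-- The deviation between the linearization `x̂(t) = x(0) + t N₀` and the continuous
Newton trajectory `x(t)`:
`x̂(t) − x(t) = (t + e^{−t} − 1)N₀ + F'(x₀)⁻¹(F(x(t)) − F(x₀)) − (x(t) − x₀)`. -/
theorem continuous_newton_linearization_deviation
    {X Y : Type*} [NormedAddCommGroup X] [NormedSpace ℝ X] [CompleteSpace X]
    [NormedAddCommGroup Y] [NormedSpace ℝ Y] [CompleteSpace Y]
    (F : X → Y) (DF : X → X →L[ℝ] Y) (x : ℝ → X) (x' : ℝ → X)
    (hx : ∀ t : ℝ, 0 ≤ t → HasDerivAt x (x' t) t)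
    (hx' : ContinuousOn x' (Set.Ici (0 : ℝ)))
    (hdiff : ∀ t : ℝ, 0 ≤ t → HasFDerivAt F (DF (x t)) (x t))
    (hflow : ∀ t : ℝ, 0 ≤ t → DF (x t) (x' t) = -F (x t))
    (A₀ : Y →L[ℝ] X)
    (hinv₁ : ∀ y : Y, DF (x 0) (A₀ y) = y)
    (hinv₂ : ∀ v : X, A₀ (DF (x 0) v) = v)
    (N₀ : X) (hN₀ : N₀ = -(A₀ (F (x 0))))
    (xhat : ℝ → X) (hxhat : ∀ t : ℝ, xhat t = x 0 + t • N₀) :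
    ∀ t : ℝ, 0 ≤ t →
      xhat t - x t =
        (t + Real.exp (-t) - 1) • N₀ + A₀ (F (x t) - F (x 0)) - (x t - x 0) := by
  intro t ht
  -- g(s) = e^s • F(x s) has zero derivative on [0, t]
  set g : ℝ → Y := fun s => Real.exp s • F (x s) with hg
  have hderiv : ∀ s : ℝ, 0 ≤ s → HasDerivAt g 0 s := by
    intro s hs
    have h1 : HasDerivAt (fun u => F (x u)) (DF (x s) (x' s)) s :=
      (hdiff s hs).comp_hasDerivAt s (hx s hs)
    have h2 : HasDerivAt Real.exp (Real.exp s) s := Real.hasDerivAt_exp s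
    have : HasDerivAt (fun u => Real.exp u • F (x u)) _ s := h2.smul h1
    simpa [hflow s hs] using this
  have hconst : g t = g 0 := by
    have := constant_of_has_deriv_right_zero (f := g) (a := 0) (b := t)
      (fun s hs => ((hderiv s hs.1).continuousAt).continuousWithinAt)
      (fun s hs => (hderiv s hs.1).hasDerivWithinAt)
    exact this t ⟨ht, le_refl t⟩
  have hFt : F (x t) = Real.exp (-t) • F (x 0) := by
    have h0 : g 0 = F (x 0) := by simp [hg]
    have : Real.exp t • F (x t) = F (x 0) := by rw [← h0, ← hconst]
    calc F (x t) = Real.exp (-t) • (Real.exp t • F (x t)) := by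
          rw [smul_smul, ← Real.exp_add]; simp
      _ = Real.exp (-t) • F (x 0) := by rw [this]
  have hA : A₀ (F (x t) - F (x 0)) = (1 - Real.exp (-t)) • N₀ := by
    rw [hFt, hN₀]
    simp [map_sub, map_smul, sub_smul, smul_neg]
  rw [hxhat, hA]
  module
end

section
/- Let X and Y be real Banach spaces, F : X → Y and N : X → X, and let x∞ ∈ X with F(x∞) = 0. Assume: (i) F is Fréchet differentiable on a neighbourhood of x∞ and the map x ↦ F'(x) (into the space of continuous linear maps X → Y) is itself Fréchet differentiable at x∞; (ii) F'(x∞) has a continuous linear two-sided inverse; (iii) N is Fréchet differentiable at x∞; and (iv) F'(x)(N(x)) = −F(x) for all x in a neighbourhood of x∞. Then N(x∞) = 0 and the Fréchet derivative of N at x∞ is minus the identity: N'(x∞) = −Id_X. -/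
/-- At a regular zero `xinf` of `F`, the Newton–Raphson transform `N` vanishes and
its Fréchet derivative is minus the identity: `N'(xinf) = −Id`. -/
theorem newton_transform_derivative_at_regular_zero
    {X Y : Type*} [NormedAddCommGroup X] [NormedSpace ℝ X] [CompleteSpace X]
    [NormedAddCommGroup Y] [NormedSpace ℝ Y] [CompleteSpace Y]
    (F : X → Y) (N : X → X) (xinf : X) (hzero : F xinf = 0)
    (DF : X → X →L[ℝ] Y)
    (hdiff : ∀ᶠ x in nhds xinf, HasFDerivAt F (DF x) x)
    (DDF : X →L[ℝ] X →L[ℝ] Y) (hDF : HasFDerivAt DF DDF xinf)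
    (A : Y →L[ℝ] X)
    (hinv₁ : ∀ y : Y, DF xinf (A y) = y)
    (hinv₂ : ∀ v : X, A (DF xinf v) = v)
    (N' : X →L[ℝ] X) (hN : HasFDerivAt N N' xinf)
    (hNRT : ∀ᶠ x in nhds xinf, DF x (N x) = -F x) :
    N xinf = 0 ∧ N' = -ContinuousLinearMap.id ℝ X := by
  have hNx : N xinf = 0 := by
    have h := hNRT.self_of_nhds
    rw [hzero, neg_zero] at h
    have := hinv₂ (N xinf)
    rw [h, map_zero] at this
    exact this.symm
  refine ⟨hNx, ?_⟩
  have hF : HasFDerivAt F (DF xinf) xinf := hdiff.self_of_nhds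
  have h1 : HasFDerivAt (fun x => DF x (N x))
      ((DF xinf).comp N' + DDF.flip (N xinf)) xinf := hDF.clm_apply hN
  have h2 : HasFDerivAt (fun x => -F x) (-(DF xinf)) xinf := hF.neg
  have h3 : HasFDerivAt (fun x => -F x)
      ((DF xinf).comp N' + DDF.flip (N xinf)) xinf :=
    h1.congr_of_eventuallyEq (hNRT.mono fun x hx => hx.symm)
  have heq := h3.unique h2
  ext v
  have h5 : (DF xinf) (N' v) = -((DF xinf) v) := by
    have := congrFun (congrArg DFunLike.coe heq) v
    rw [hNx] at this
    simpa using this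
  have h4 := congrArg A h5
  rw [hinv₂, map_neg, hinv₂] at h4
  simpa using h4
end

section
/- Let X and Y be real Banach spaces, F : X → Y, x₀ ∈ X, and let N₀ ∈ X with N₀ ≠ 0 and F'(x₀)(N₀) = −F(x₀). Let K̂, K̃, τ, ε > 0, set K = K̂·K̃, and let t₀ = min(√(2τ/‖N₀‖_X), 1) and x₁ = x₀ + t₀·N₀. Assume: F is Fréchet differentiable at every point of the segment [x₀, x₁]; ‖F'(u) − F'(v)‖_{X→Y} ≤ K̃‖u − v‖_X for all u, v in that segment; ‖N₀‖_X ≤ K̂·‖F(x₀)‖_Y; and τ·(1+ε)² ≤ min{(2/K²)·‖N₀‖_X^{−1}, 1/K}. Then ‖F(x₁)‖_Y ≤ q·‖F(x₀)‖_Y, where q = max(1 − K·τ·ε, 1/(1+ε)) and q ∈ (0,1). -/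
/-- The inductive contraction step in the convergence proof of the adaptive Newton
method: with step size `t₀ = min (√(2τ/‖N₀‖)) 1` and `x₁ = x₀ + t₀N₀`, one has
`‖F(x₁)‖ ≤ q‖F(x₀)‖` with `q = max (1 − Kτε) (1/(1+ε)) ∈ (0,1)`. -/
theorem adaptive_newton_contraction_step
    {X Y : Type*} [NormedAddCommGroup X] [NormedSpace ℝ X] [CompleteSpace X]
    [NormedAddCommGroup Y] [NormedSpace ℝ Y] [CompleteSpace Y]
    (F : X → Y) (DF : X → X →L[ℝ] Y) (x₀ N₀ : X) (hN₀ne : N₀ ≠ 0)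
    (hNewton : DF x₀ N₀ = -F x₀)
    (Khat Ktil τ ε K : ℝ)
    (hKhat : 0 < Khat) (hKtil : 0 < Ktil) (hτ : 0 < τ) (hε : 0 < ε)
    (hK : K = Khat * Ktil)
    (t₀ : ℝ) (ht₀ : t₀ = min (Real.sqrt (2 * τ / ‖N₀‖)) 1)
    (x₁ : X) (hx₁ : x₁ = x₀ + t₀ • N₀)
    (hdiff : ∀ u ∈ segment ℝ x₀ x₁, HasFDerivAt F (DF u) u)
    (hLip : ∀ u ∈ segment ℝ x₀ x₁, ∀ v ∈ segment ℝ x₀ x₁,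
      ‖DF u - DF v‖ ≤ Ktil * ‖u - v‖)
    (hbound : ‖N₀‖ ≤ Khat * ‖F x₀‖)
    (hτsmall : τ * (1 + ε) ^ 2 ≤ min (2 / K ^ 2 * ‖N₀‖⁻¹) (1 / K))
    (q : ℝ) (hq : q = max (1 - K * τ * ε) (1 / (1 + ε))) :
    q ∈ Set.Ioo (0 : ℝ) 1 ∧ ‖F x₁‖ ≤ q * ‖F x₀‖ := by
  have hN0 : 0 < ‖N₀‖ := norm_pos_iff.mpr hN₀ne
  have hK0 : 0 < K := by rw [hK]; positivity
  have hε1 : (0:ℝ) < 1 + ε := by linarith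
  -- consequences of hτsmall
  have hτ1 : K * τ * (1 + ε) ^ 2 ≤ 1 := by
    have h := le_trans hτsmall (min_le_right _ _)
    rw [le_div_iff₀ hK0] at h
    nlinarith
  have hτ2 : K ^ 2 * τ * (1 + ε) ^ 2 * ‖N₀‖ ≤ 2 := by
    have h := le_trans hτsmall (min_le_left _ _)
    have h' : τ * (1 + ε) ^ 2 * (K ^ 2 * ‖N₀‖) ≤ 2 / K ^ 2 * ‖N₀‖⁻¹ * (K ^ 2 * ‖N₀‖) := by
      apply mul_le_mul_of_nonneg_right h; positivity
    calc K ^ 2 * τ * (1 + ε) ^ 2 * ‖N₀‖ = τ * (1 + ε) ^ 2 * (K ^ 2 * ‖N₀‖) := by ring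
      _ ≤ 2 / K ^ 2 * ‖N₀‖⁻¹ * (K ^ 2 * ‖N₀‖) := h'
      _ = 2 := by field_simp
  -- properties of t₀
  have ht0pos : 0 < t₀ := by
    rw [ht₀]
    exact lt_min (Real.sqrt_pos.mpr (by positivity)) one_pos
  have ht0le1 : t₀ ≤ 1 := by rw [ht₀]; exact min_le_right _ _
  have ht0sq : t₀ ^ 2 * ‖N₀‖ ≤ 2 * τ := by
    have h1 : t₀ ≤ Real.sqrt (2 * τ / ‖N₀‖) := by rw [ht₀]; exact min_le_left _ _
    have h2 : t₀ ^ 2 ≤ 2 * τ / ‖N₀‖ := (Real.le_sqrt ht0pos.le (by positivity)).mp h1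
    rw [le_div_iff₀ hN0] at h2
    linarith
  have ht0ge : K * τ * (1 + ε) ≤ t₀ := by
    rw [ht₀]
    apply le_min
    · rw [Real.le_sqrt (by positivity) (by positivity)]
      rw [le_div_iff₀ hN0]
      nlinarith
    · nlinarith [mul_pos (mul_pos hK0 hτ) hε]
  -- q ∈ (0,1)
  have hq0 : 0 < q := by
    rw [hq]
    exact lt_of_lt_of_le (by positivity) (le_max_right _ _)
  have hq1 : q < 1 := by
    rw [hq]
    apply max_lt
    · nlinarith [mul_pos (mul_pos hK0 hτ) hε]
    · rw [div_lt_one hε1]; linarith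
  refine ⟨⟨hq0, hq1⟩, ?_⟩
  -- the analytic part
  set v : X := t₀ • N₀ with hv
  have hnormv : ‖v‖ = t₀ * ‖N₀‖ := by
    rw [hv, norm_smul, Real.norm_eq_abs, abs_of_pos ht0pos]
  have hseg : ∀ s : ℝ, s ∈ Set.Icc (0:ℝ) 1 → x₀ + s • v ∈ segment ℝ x₀ x₁ := by
    intro s hs
    refine ⟨1 - s, s, by linarith [hs.2], hs.1, by ring, ?_⟩
    rw [hx₁]
    module
  have key : ∀ s ∈ Set.uIcc (0:ℝ) 1,
      HasDerivAt (fun u : ℝ => F (x₀ + u • v)) ((DF (x₀ + s • v)) v) s := by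
    intro s hs
    have hmem := hseg s (by rwa [Set.uIcc_of_le zero_le_one] at hs)
    have hγ : HasDerivAt (fun u : ℝ => x₀ + u • v) v s := by
      simpa using ((hasDerivAt_id s).smul_const v).const_add x₀
    exact (hdiff _ hmem).comp_hasDerivAt s hγ
  have hcontDF : ContinuousOn (fun s : ℝ => DF (x₀ + s • v)) (Set.Icc 0 1) := by
    have hlip : LipschitzOnWith (Real.toNNReal (Ktil * ‖v‖))
        (fun s : ℝ => DF (x₀ + s • v)) (Set.Icc 0 1) := by
      apply LipschitzOnWith.of_dist_le_mul
      intro a ha b hb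
      rw [dist_eq_norm, Real.dist_eq, Real.coe_toNNReal _ (by positivity)]
      calc ‖DF (x₀ + a • v) - DF (x₀ + b • v)‖
          ≤ Ktil * ‖(x₀ + a • v) - (x₀ + b • v)‖ := hLip _ (hseg a ha) _ (hseg b hb)
        _ = Ktil * ‖v‖ * |a - b| := by
            rw [add_sub_add_left_eq_sub, ← sub_smul, norm_smul, Real.norm_eq_abs]
            ring
    exact hlip.continuousOn
  have hcont : ContinuousOn (fun s : ℝ => (DF (x₀ + s • v)) v) (Set.Icc 0 1) :=
    hcontDF.clm_apply continuousOn_const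
  have hint : IntervalIntegrable (fun s : ℝ => (DF (x₀ + s • v)) v) MeasureTheory.volume 0 1 := by
    apply ContinuousOn.intervalIntegrable
    rwa [Set.uIcc_of_le zero_le_one]
  have hFTC : ∫ s in (0:ℝ)..1, (DF (x₀ + s • v)) v = F x₁ - F x₀ := by
    rw [intervalIntegral.integral_eq_sub_of_hasDerivAt key hint]
    rw [hx₁]
    norm_num
  have hDFv : (DF x₀) v = -(t₀ • F x₀) := by
    rw [hv, map_smul, hNewton, smul_neg]
  have hsplit : F x₁ - F x₀ + t₀ • F x₀
      = ∫ s in (0:ℝ)..1, ((DF (x₀ + s • v)) v - (DF x₀) v) := by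
    rw [intervalIntegral.integral_sub hint intervalIntegrable_const, hFTC,
      intervalIntegral.integral_const, hDFv]
    simp
  have hbnd : ‖F x₁ - F x₀ + t₀ • F x₀‖ ≤ Ktil * ‖v‖ ^ 2 / 2 := by
    rw [hsplit]
    have hInt2 : IntervalIntegrable (fun s : ℝ => Ktil * ‖v‖ ^ 2 * s)
        MeasureTheory.volume 0 1 := by
      exact (continuous_const.mul continuous_id).intervalIntegrable _ _
    have hae : ∀ᵐ s ∂(MeasureTheory.volume.restrict (Set.uIoc (0:ℝ) 1)),
        ‖(DF (x₀ + s • v)) v - (DF x₀) v‖ ≤ Ktil * ‖v‖ ^ 2 * s := by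
      rw [Set.uIoc_of_le zero_le_one]
      refine (MeasureTheory.ae_restrict_iff' measurableSet_Ioc).mpr
        (Filter.Eventually.of_forall fun s hs => ?_)
      have hmem : x₀ + s • v ∈ segment ℝ x₀ x₁ := hseg s ⟨hs.1.le, hs.2⟩
      have h0 : x₀ ∈ segment ℝ x₀ x₁ := left_mem_segment ℝ x₀ x₁
      calc ‖(DF (x₀ + s • v)) v - (DF x₀) v‖
          = ‖(DF (x₀ + s • v) - DF x₀) v‖ := by simp
        _ ≤ ‖DF (x₀ + s • v) - DF x₀‖ * ‖v‖ := ContinuousLinearMap.le_opNorm _ _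
        _ ≤ Ktil * ‖(x₀ + s • v) - x₀‖ * ‖v‖ := by
            apply mul_le_mul_of_nonneg_right (hLip _ hmem _ h0) (norm_nonneg _)
        _ = Ktil * ‖v‖ ^ 2 * s := by
            rw [add_sub_cancel_left, norm_smul, Real.norm_eq_abs, abs_of_pos hs.1]
            ring
    calc ‖∫ s in (0:ℝ)..1, ((DF (x₀ + s • v)) v - (DF x₀) v)‖
        ≤ |∫ s in (0:ℝ)..1, Ktil * ‖v‖ ^ 2 * s| :=
          intervalIntegral.norm_integral_le_abs_of_norm_le hae hInt2
      _ = Ktil * ‖v‖ ^ 2 / 2 := by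
          rw [intervalIntegral.integral_const_mul, integral_id]
          rw [abs_of_nonneg (by positivity)]
          ring
  have h1 : ‖F x₁‖ ≤ (1 - t₀) * ‖F x₀‖ + Ktil * ‖v‖ ^ 2 / 2 := by
    have heq : F x₁ = (1 - t₀) • F x₀ + (F x₁ - F x₀ + t₀ • F x₀) := by module
    calc ‖F x₁‖ = ‖(1 - t₀) • F x₀ + (F x₁ - F x₀ + t₀ • F x₀)‖ := by rw [← heq]
      _ ≤ ‖(1 - t₀) • F x₀‖ + ‖F x₁ - F x₀ + t₀ • F x₀‖ := norm_add_le _ _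
      _ ≤ (1 - t₀) * ‖F x₀‖ + Ktil * ‖v‖ ^ 2 / 2 := by
          rw [norm_smul, Real.norm_eq_abs, abs_of_nonneg (by linarith)]
          linarith [hbnd]
  have h2 : Ktil * ‖v‖ ^ 2 / 2 ≤ K * τ * ‖F x₀‖ := by
    rw [hnormv, hK]
    calc Ktil * (t₀ * ‖N₀‖) ^ 2 / 2 = Ktil / 2 * (t₀ ^ 2 * ‖N₀‖) * ‖N₀‖ := by ring
      _ ≤ Ktil / 2 * (2 * τ) * ‖N₀‖ := by
          apply mul_le_mul_of_nonneg_right _ (norm_nonneg _)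
          apply mul_le_mul_of_nonneg_left ht0sq (by positivity)
      _ = Ktil * τ * ‖N₀‖ := by ring
      _ ≤ Ktil * τ * (Khat * ‖F x₀‖) := by
          apply mul_le_mul_of_nonneg_left hbound (by positivity)
      _ = Khat * Ktil * τ * ‖F x₀‖ := by ring
  have hF0 : 0 ≤ ‖F x₀‖ := norm_nonneg _
  have h3 : ‖F x₁‖ ≤ (1 - K * τ * ε) * ‖F x₀‖ := by
    have hp : K * τ * (1 + ε) * ‖F x₀‖ ≤ t₀ * ‖F x₀‖ :=
      mul_le_mul_of_nonneg_right ht0ge hF0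
    have hp' : K * τ * ‖F x₀‖ + K * τ * ε * ‖F x₀‖ ≤ t₀ * ‖F x₀‖ := by
      rw [show K * τ * (1 + ε) * ‖F x₀‖
        = K * τ * ‖F x₀‖ + K * τ * ε * ‖F x₀‖ from by ring] at hp
      exact hp
    have : (1 - t₀) * ‖F x₀‖ + K * τ * ‖F x₀‖ ≤ (1 - K * τ * ε) * ‖F x₀‖ := by
      ring_nf
      ring_nf at hp'
      linarith
    linarith
  have hqge : 1 - K * τ * ε ≤ q := by rw [hq]; exact le_max_left _ _
  calc ‖F x₁‖ ≤ (1 - K * τ * ε) * ‖F x₀‖ := h3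
    _ ≤ q * ‖F x₀‖ := mul_le_mul_of_nonneg_right hqge hF0
end

section
/- The transcendental equation θ = √(2e)·cosh(θ/4) has exactly two real solutions; that is, the set {θ ∈ ℝ : θ = √(2e)·cosh(θ/4)} has exactly two elements. -/
open Real Set

private noncomputable def bratuF : ℝ → ℝ :=
  fun θ => Real.sqrt (2 * Real.exp 1) * Real.cosh (θ / 4) - θ

private lemma bratuF_hasDerivAt (x : ℝ) :
    HasDerivAt bratuF (Real.sqrt (2 * Real.exp 1) * (Real.sinh (x / 4) * (1 / 4)) - 1) x := by
  have h1 : HasDerivAt (fun y : ℝ => y / 4) (1 / 4) x := by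
    simpa using (hasDerivAt_id x).div_const 4
  exact ((h1.cosh).const_mul _).sub (hasDerivAt_id x)

private lemma bratuF_deriv_hasDerivAt (x : ℝ) :
    HasDerivAt (fun y => Real.sqrt (2 * Real.exp 1) * (Real.sinh (y / 4) * (1 / 4)) - 1)
      (Real.sqrt (2 * Real.exp 1) * (Real.cosh (x / 4) * (1 / 4) * (1 / 4))) x := by
  have h1 : HasDerivAt (fun y : ℝ => y / 4) (1 / 4) x := by
    simpa using (hasDerivAt_id x).div_const 4
  exact ((h1.sinh.mul_const (1 / 4)).const_mul (Real.sqrt (2 * Real.exp 1))).sub_const 1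

private lemma bratuF_strictConvex : StrictConvexOn ℝ univ bratuF := by
  have hc : Continuous bratuF :=
    (continuous_const.mul (Real.continuous_cosh.comp (continuous_id.div_const 4))).sub
      continuous_id
  refine strictConvexOn_univ_of_deriv2_pos hc fun x => ?_
  have hd1 : deriv bratuF =
      fun y => Real.sqrt (2 * Real.exp 1) * (Real.sinh (y / 4) * (1 / 4)) - 1 :=
    funext fun y => (bratuF_hasDerivAt y).deriv
  have : (deriv^[2] bratuF) x = Real.sqrt (2 * Real.exp 1) * (Real.cosh (x / 4) * (1 / 4) * (1 / 4)) := by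
    simp only [Function.iterate_succ, Function.iterate_zero, Function.comp_apply, id_eq, hd1]
    exact (bratuF_deriv_hasDerivAt x).deriv
  rw [this]
  have h1 : 0 < Real.sqrt (2 * Real.exp 1) :=
    Real.sqrt_pos.mpr (by positivity)
  have h2 : 0 < Real.cosh (x / 4) := Real.cosh_pos _
  positivity

private lemma bratuF_four_neg : bratuF 4 < 0 := by
  have hE1 := Real.exp_one_gt_d9
  have hE2 := Real.exp_one_lt_d9
  have hEpos := Real.exp_pos 1
  have hcosh : Real.cosh (4 / 4) = (Real.exp 1 + (Real.exp 1)⁻¹) / 2 := by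
    norm_num [Real.cosh_eq, Real.exp_neg]
  have hcoshpos : 0 < Real.cosh (4 / 4) := Real.cosh_pos _
  have hsq : Real.sqrt (2 * Real.exp 1) ^ 2 = 2 * Real.exp 1 :=
    Real.sq_sqrt (by positivity)
  have hlt : (Real.sqrt (2 * Real.exp 1) * Real.cosh (4 / 4)) ^ 2 < 4 ^ 2 := by
    rw [mul_pow, hsq, hcosh]
    have hne : Real.exp 1 ≠ 0 := ne_of_gt hEpos
    have h0 : (Real.exp 1 + (Real.exp 1)⁻¹) * Real.exp 1 = Real.exp 1 ^ 2 + 1 := by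
      rw [add_mul, inv_mul_cancel₀ hne]; ring
    have hexpand : (Real.exp 1 + (Real.exp 1)⁻¹) ^ 2 * Real.exp 1 ^ 2 =
        (Real.exp 1 ^ 2 + 1) ^ 2 := by
      rw [← mul_pow, h0]
    have h2 : Real.exp 1 ^ 2 < 7.3891 := by nlinarith
    have h4 : Real.exp 1 ^ 4 < 54.6 := by nlinarith [sq_nonneg (Real.exp 1), h2]
    have key : (Real.exp 1 ^ 2 + 1) ^ 2 < 32 * Real.exp 1 := by
      nlinarith [h2, h4, hE1]
    nlinarith [hexpand, key, mul_pos hEpos hEpos, sq_nonneg (Real.exp 1 + (Real.exp 1)⁻¹)]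
  have hfin : Real.sqrt (2 * Real.exp 1) * Real.cosh (4 / 4) < 4 :=
    lt_of_pow_lt_pow_left₀ 2 (by norm_num) hlt
  simp only [bratuF]
  linarith

private lemma bratuF_continuous : Continuous bratuF :=
  (continuous_const.mul (Real.continuous_cosh.comp (continuous_id.div_const 4))).sub
    continuous_id

private lemma bratuF_zero_pos : 0 < bratuF 0 := by
  have : 0 < Real.sqrt (2 * Real.exp 1) := Real.sqrt_pos.mpr (by positivity)
  simpa [bratuF] using this

private lemma bratuF_sixteen_pos : 0 < bratuF 16 := by
  have hE1 := Real.exp_one_gt_d9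
  have h1 : (1 : ℝ) ≤ Real.sqrt (2 * Real.exp 1) := by
    have : Real.sqrt 1 ≤ Real.sqrt (2 * Real.exp 1) := Real.sqrt_le_sqrt (by nlinarith)
    simpa using this
  have hexp4 : (32 : ℝ) < Real.exp 4 := by
    have : Real.exp 1 ^ 4 = Real.exp 4 := by
      rw [show ((4 : ℝ)) = ((4 : ℕ) : ℝ) by norm_num, Real.exp_one_pow]
    rw [← this]
    have h2 : (7 : ℝ) < Real.exp 1 ^ 2 := by nlinarith
    nlinarith [h2]
  have hcosh : (16 : ℝ) < Real.cosh (16 / 4) := by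
    rw [show (16 : ℝ) / 4 = 4 by norm_num, Real.cosh_eq]
    have := Real.exp_pos (-4 : ℝ)
    linarith
  have : (16 : ℝ) < Real.sqrt (2 * Real.exp 1) * Real.cosh (16 / 4) := by
    calc (16 : ℝ) < Real.cosh (16 / 4) := hcosh
    _ = 1 * Real.cosh (16 / 4) := by ring
    _ ≤ Real.sqrt (2 * Real.exp 1) * Real.cosh (16 / 4) :=
        mul_le_mul_of_nonneg_right h1 (Real.cosh_pos _).le
  simp only [bratuF]
  linarith

private lemma bratuF_no_three_zeros {x y z : ℝ} (hxy : x < y) (hyz : y < z)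
    (hx : bratuF x = 0) (hy : bratuF y = 0) (hz : bratuF z = 0) : False := by
  have := bratuF_strictConvex.slope_strict_mono_adjacent (Set.mem_univ x) (Set.mem_univ z) hxy hyz
  rw [hx, hy, hz] at this
  simp at this

/-- The transcendental equation `θ = √(2e)·cosh(θ/4)` has exactly two real
solutions. -/
theorem bratu_transcendental_two_solutions :
    {θ : ℝ | θ = Real.sqrt (2 * Real.exp 1) * Real.cosh (θ / 4)}.encard = 2 := by
  have hset : {θ : ℝ | θ = Real.sqrt (2 * Real.exp 1) * Real.cosh (θ / 4)} =
      {θ : ℝ | bratuF θ = 0} := by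
    ext θ
    simp only [Set.mem_setOf_eq, bratuF, sub_eq_zero]
    constructor <;> intro h <;> linarith
  rw [hset]
  -- first zero in [0, 4]
  obtain ⟨a, haI, ha⟩ : ∃ a ∈ Set.Icc (0 : ℝ) 4, bratuF a = 0 := by
    have h := intermediate_value_Icc' (by norm_num : (0 : ℝ) ≤ 4)
      bratuF_continuous.continuousOn
    have h0 : (0 : ℝ) ∈ Set.Icc (bratuF 4) (bratuF 0) :=
      ⟨bratuF_four_neg.le, bratuF_zero_pos.le⟩
    obtain ⟨a, haI, ha⟩ := h h0
    exact ⟨a, haI, ha⟩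
  -- second zero in [4, 16]
  obtain ⟨b, hbI, hb⟩ : ∃ b ∈ Set.Icc (4 : ℝ) 16, bratuF b = 0 := by
    have h := intermediate_value_Icc (by norm_num : (4 : ℝ) ≤ 16)
      bratuF_continuous.continuousOn
    have h0 : (0 : ℝ) ∈ Set.Icc (bratuF 4) (bratuF 16) :=
      ⟨bratuF_four_neg.le, bratuF_sixteen_pos.le⟩
    obtain ⟨b, hbI, hb⟩ := h h0
    exact ⟨b, hbI, hb⟩
  have ha4 : a < 4 := lt_of_le_of_ne haI.2 (by rintro rfl; exact absurd ha (by linarith [bratuF_four_neg]))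
  have hb4 : 4 < b := lt_of_le_of_ne (by exact hbI.1) (by rintro rfl; exact absurd hb (by linarith [bratuF_four_neg]))
  have hab : a < b := ha4.trans hb4
  have hSeq : {θ : ℝ | bratuF θ = 0} = {a, b} := by
    ext x
    simp only [Set.mem_setOf_eq, Set.mem_insert_iff, Set.mem_singleton_iff]
    constructor
    · intro hx
      rcases lt_trichotomy x a with h | h | h
      · exact absurd (bratuF_no_three_zeros h hab hx ha hb) (fun h => h)
      · exact Or.inl h
      · rcases lt_trichotomy x b with h' | h' | h'
        · exact absurd (bratuF_no_three_zeros h h' ha hx hb) (fun h => h)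
        · exact Or.inr h'
        · exact absurd (bratuF_no_three_zeros hab h' ha hb hx) (fun h => h)
    · rintro (rfl | rfl)
      · exact ha
      · exact hb
  rw [hSeq]
  exact Set.encard_pair hab.ne
end
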